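/- arXiv:1509.01618 — 7 statements merged into one kernel-verified Lean document; each statement's English description precedes it below -/
import Mathlib

section
/- For every k-singular set Y ⊆ 𝒴 (writing C(Y) = {c(y) : y ∈ Y} ⊆ C, which has exactly k elements), assuming e_k(L̃) > 0, one has det(L̃_{C(Y)}) / ( e_k(L̃) · ∏_{y ∈ Y} |𝒴_{c(y)}| ) = det(L_{C(Y)}) / e_k(L_{C(𝒴)}). In other words, the two-stage CoreDpp sampler (sample a k-subset of cores from the k-DPP with kernel L̃, then pick a uniform element from each chosen core's part) assigns to each k-singular Y the same probability as the k-DPP with kernel L_{C(𝒴)}. -/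
open Matrix Finset

variable {𝒴 : Type*}

/-- Principal minor of `A` indexed by the finite set `S`:
the determinant of the principal submatrix `A_S`. -/
noncomputable def pminor [DecidableEq 𝒴] (A : Matrix 𝒴 𝒴 ℝ) (S : Finset 𝒴) : ℝ :=
  (A.submatrix (fun i : S => (i : 𝒴)) (fun j : S => (j : 𝒴))).det

/-- `Y` is singular with respect to the partition whose parts are the fibers of the
core map `part` (so `𝒴_c = part⁻¹(c)`): every part contains at most one element of `Y`. -/
def IsSingular [DecidableEq 𝒴] (part : 𝒴 → 𝒴) (Y : Finset 𝒴) : Prop :=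
  ∀ c : 𝒴, (Y.filter fun y => part y = c).card ≤ 1

instance [DecidableEq 𝒴] [Fintype 𝒴] (part : 𝒴 → 𝒴) : DecidablePred (IsSingular part) :=
  fun _ => by unfold IsSingular; infer_instance

/-- The size `|𝒴_c|` of the part with core `c`. -/
def psize [Fintype 𝒴] [DecidableEq 𝒴] (part : 𝒴 → 𝒴) (c : 𝒴) : ℕ :=
  (Finset.univ.filter fun y => part y = c).card

/-- The rescaled core kernel `L̃` with entries `L̃_{c,c'} = sqrt(|𝒴_c|·|𝒴_{c'}|)·L_{c,c'}`. -/
noncomputable def coreK [Fintype 𝒴] [DecidableEq 𝒴] (L : Matrix 𝒴 𝒴 ℝ) (part : 𝒴 → 𝒴) :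
    Matrix 𝒴 𝒴 ℝ :=
  fun i j => Real.sqrt ((psize part i : ℝ) * (psize part j : ℝ)) * L i j

section Aux

variable [Fintype 𝒴] [DecidableEq 𝒴]

lemma injOn_of_singular (part : 𝒴 → 𝒴) {Y : Finset 𝒴} (h : IsSingular part Y) :
    Set.InjOn part Y := by
  intro a ha b hb hab
  by_contra hne
  have h2 : 1 < (Y.filter fun y => part y = part a).card := by
    refine Finset.one_lt_card.mpr ⟨a, ?_, b, ?_, hne⟩
    · exact Finset.mem_filter.mpr ⟨Finset.mem_coe.mp ha, rfl⟩
    · exact Finset.mem_filter.mpr ⟨Finset.mem_coe.mp hb, hab.symm⟩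
  have := h (part a)
  omega

lemma pminor_reindex (A : Matrix 𝒴 𝒴 ℝ) (f : 𝒴 → 𝒴) (Y : Finset 𝒴)
    (hinj : Set.InjOn f Y) :
    pminor (A.submatrix f f) Y = pminor A (Y.image f) := by
  have hbij : Function.Bijective (fun x : Y =>
      (⟨f x, Finset.mem_image_of_mem f x.2⟩ : (Y.image f : Finset 𝒴))) := by
    constructor
    · intro x y hxy
      exact Subtype.ext (hinj x.2 y.2 (by simpa using congrArg Subtype.val hxy))
    · rintro ⟨z, hz⟩
      obtain ⟨y, hy, rfl⟩ := Finset.mem_image.mp hz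
      exact ⟨⟨y, hy⟩, rfl⟩
  have key : (A.submatrix f f).submatrix (fun i : Y => (i : 𝒴)) (fun j : Y => (j : 𝒴))
      = (A.submatrix (fun i : (Y.image f) => (i : 𝒴)) (fun j : (Y.image f) => (j : 𝒴))).submatrix
          (Equiv.ofBijective _ hbij) (Equiv.ofBijective _ hbij) := rfl
  rw [pminor, key, Matrix.det_submatrix_equiv_self]
  rfl

lemma pminor_coreK (L : Matrix 𝒴 𝒴 ℝ) (part : 𝒴 → 𝒴) (S : Finset 𝒴) :
    pminor (coreK L part) S = (∏ c ∈ S, (psize part c : ℝ)) * pminor L S := by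
  have h1 : ((coreK L part).submatrix (fun i : S => (i : 𝒴)) (fun j : S => (j : 𝒴)))
      = Matrix.of (fun i j : S => Real.sqrt (psize part (i : 𝒴)) *
          (Matrix.of (fun i j : S => Real.sqrt (psize part (j : 𝒴)) *
            (L.submatrix (fun i : S => (i : 𝒴)) (fun j : S => (j : 𝒴))) i j) i j)) := by
    ext i j
    simp only [Matrix.submatrix_apply, Matrix.of_apply, coreK]
    rw [Real.sqrt_mul (by positivity)]
    ring
  rw [pminor, h1, Matrix.det_mul_column, Matrix.det_mul_row, ← mul_assoc]
  have h2 : (∏ i : S, Real.sqrt (psize part (i : 𝒴))) *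
      (∏ i : S, Real.sqrt (psize part (i : 𝒴))) = ∏ c ∈ S, (psize part c : ℝ) := by
    rw [Finset.prod_coe_sort S (fun c => Real.sqrt (psize part c)),
      ← Finset.prod_mul_distrib]
    exact Finset.prod_congr rfl fun c _ => Real.mul_self_sqrt (by positivity)
  rw [h2]
  rfl

lemma card_transversal (part : 𝒴 → 𝒴) (k : ℕ) (S : Finset 𝒴) (hS : S.card = k) :
    (Finset.filter (fun Z => Z.image part = S)
        ((Finset.univ.powersetCard k).filter (IsSingular part))).card
      = ∏ c ∈ S, psize part c := by
  simp only [psize]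
  rw [← Finset.card_pi S (fun c => Finset.univ.filter fun y => part y = c)]
  have huniq : ∀ Z, Z ∈ Finset.filter (fun Z => Z.image part = S)
      ((Finset.univ.powersetCard k).filter (IsSingular part)) →
      ∀ c ∈ S, ∃! a, a ∈ Z ∧ part a = c := by
    intro Z hZ c hc
    rw [Finset.mem_filter] at hZ
    obtain ⟨hZ1, hZim⟩ := hZ
    rw [Finset.mem_filter] at hZ1
    have hsing := hZ1.2
    rw [← hZim] at hc
    obtain ⟨y, hy, hpy⟩ := Finset.mem_image.mp hc
    refine ⟨y, ⟨hy, hpy⟩, ?_⟩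
    intro z ⟨hz, hpz⟩
    have h1 := hsing c
    have hz' : z ∈ Z.filter fun y => part y = c := Finset.mem_filter.mpr ⟨hz, hpz⟩
    have hy' : y ∈ Z.filter fun y => part y = c := Finset.mem_filter.mpr ⟨hy, hpy⟩
    exact Finset.card_le_one.mp h1 z hz' y hy'
  refine Finset.card_bij'
    (fun Z hZ => fun c hc => Finset.choose (fun a => part a = c) Z (huniq Z hZ c hc))
    (fun f _ => S.attach.image fun c => f c.1 c.2) ?_ ?_ ?_ ?_
  · -- i maps into the pi set
    intro Z hZ
    rw [Finset.mem_pi]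
    intro c hc
    simp only [Finset.mem_filter, Finset.mem_univ, true_and]
    exact Finset.choose_property (fun a => part a = c) Z (huniq Z hZ c hc)
  · -- j maps into the Z set
    intro f hf
    rw [Finset.mem_pi] at hf
    have hpart : ∀ (c : 𝒴) (hc : c ∈ S), part (f c hc) = c := by
      intro c hc
      have := hf c hc
      simpa using this
    have hinjattach : Set.InjOn (fun c : {x // x ∈ S} => f c.1 c.2) S.attach := by
      intro a _ b _ hab
      have h' : f a.1 a.2 = f b.1 b.2 := hab
      refine Subtype.ext ?_
      rw [← hpart a.1 a.2, ← hpart b.1 b.2, h']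
    have hcard : (S.attach.image fun c => f c.1 c.2).card = k := by
      rw [Finset.card_image_of_injOn hinjattach, Finset.card_attach, hS]
    refine Finset.mem_filter.mpr ⟨Finset.mem_filter.mpr ⟨?_, ?_⟩, ?_⟩
    · exact Finset.mem_powersetCard_univ.mpr hcard
    · -- singular
      intro c
      refine Finset.card_le_one.mpr ?_
      intro a ha b hb
      rw [Finset.mem_filter] at ha hb
      obtain ⟨ha1, ha2⟩ := ha
      obtain ⟨hb1, hb2⟩ := hb
      obtain ⟨ca, _, rfl⟩ := Finset.mem_image.mp ha1
      obtain ⟨cb, _, rfl⟩ := Finset.mem_image.mp hb1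
      rw [hpart ca.1 ca.2] at ha2
      rw [hpart cb.1 cb.2] at hb2
      have : ca = cb := Subtype.ext (ha2.trans hb2.symm)
      rw [this]
    · -- image = S
      ext c
      simp only [Finset.mem_image]
      constructor
      · rintro ⟨z, hz, rfl⟩
        obtain ⟨cz, _, rfl⟩ := hz
        rw [hpart cz.1 cz.2]
        exact cz.2
      · intro hc
        exact ⟨f c hc, ⟨⟨c, hc⟩, Finset.mem_attach _ _, rfl⟩, hpart c hc⟩
  · -- left inverse : j (i Z) = Z
    intro Z hZ
    have hZ' := hZ
    rw [Finset.mem_filter] at hZ'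
    obtain ⟨hZ1, hZim⟩ := hZ'
    ext y
    simp only [Finset.mem_image]
    constructor
    · rintro ⟨c, _, rfl⟩
      exact (Finset.choose_spec (fun a => part a = c.1) Z (huniq Z hZ c.1 c.2)).1
    · intro hy
      have hc : part y ∈ S := by
        rw [← hZim]; exact Finset.mem_image_of_mem part hy
      refine ⟨⟨part y, hc⟩, Finset.mem_attach _ _, ?_⟩
      have hu := huniq Z hZ (part y) hc
      have h1 := Finset.choose_spec (fun a => part a = part y) Z hu
      exact hu.unique h1 ⟨hy, rfl⟩
  · -- right inverse : i (j f) = f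
    intro f hf
    rw [Finset.mem_pi] at hf
    have hpart : ∀ (c : 𝒴) (hc : c ∈ S), part (f c hc) = c := by
      intro c hc
      have := hf c hc
      simpa using this
    funext c hc
    have hmemZ : f c hc ∈ S.attach.image (fun c => f c.1 c.2) :=
      Finset.mem_image.mpr ⟨⟨c, hc⟩, Finset.mem_attach _ _, rfl⟩
    have hu : ∃! a, a ∈ (S.attach.image fun c => f c.1 c.2) ∧ part a = c := by
      refine ⟨f c hc, ⟨hmemZ, hpart c hc⟩, ?_⟩
      rintro z ⟨hz, hpz⟩
      obtain ⟨cz, _, rfl⟩ := Finset.mem_image.mp hz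
      obtain ⟨cz, hcz⟩ := cz
      have hcc : cz = c := by rw [← hpz, hpart cz hcz]
      subst hcc
      rfl
    exact hu.unique (Finset.choose_spec _ _ _) ⟨hmemZ, hpart c hc⟩

lemma ek_eq (L : Matrix 𝒴 𝒴 ℝ) (part : 𝒴 → 𝒴) (C : Finset 𝒴)
    (hmem : ∀ y, part y ∈ C) (k : ℕ) :
    ∑ Z ∈ Finset.univ.powersetCard k, pminor (L.submatrix part part) Z
      = ∑ S ∈ C.powersetCard k, (∏ c ∈ S, (psize part c : ℝ)) * pminor L S := by
  have hvanish : ∀ Z ∈ Finset.univ.powersetCard k,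
      pminor (L.submatrix part part) Z ≠ 0 → IsSingular part Z := by
    intro Z _ hne
    by_contra hns
    apply hne
    unfold IsSingular at hns
    push_neg at hns
    obtain ⟨c, hc⟩ := hns
    obtain ⟨a, ha, b, hb, hab⟩ := Finset.one_lt_card.mp hc
    rw [Finset.mem_filter] at ha hb
    refine Matrix.det_zero_of_row_eq (M := (L.submatrix part part).submatrix
      (fun i : Z => (i : 𝒴)) (fun j : Z => (j : 𝒴)))
      (i := ⟨a, ha.1⟩) (j := ⟨b, hb.1⟩) (fun h => hab (congrArg Subtype.val h)) ?_
    funext j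
    simp only [Matrix.submatrix_apply]
    rw [ha.2, hb.2]
  have hmaps : ∀ Z ∈ (Finset.univ.powersetCard k).filter (IsSingular part),
      Z.image part ∈ C.powersetCard k := by
    intro Z hZ
    rw [Finset.mem_filter] at hZ
    obtain ⟨hZ1, hZs⟩ := hZ
    rw [Finset.mem_powersetCard] at hZ1 ⊢
    constructor
    · intro c hc
      obtain ⟨y, _, rfl⟩ := Finset.mem_image.mp hc
      exact hmem y
    · rw [Finset.card_image_of_injOn (injOn_of_singular part hZs)]
      exact hZ1.2
  rw [← Finset.sum_filter_of_ne hvanish,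
    ← Finset.sum_fiberwise_of_maps_to hmaps (fun Z => pminor (L.submatrix part part) Z)]
  refine Finset.sum_congr rfl fun S hS => ?_
  have hSk : S.card = k := (Finset.mem_powersetCard.mp hS).2
  have hterm : ∀ Z ∈ Finset.filter (fun Z => Z.image part = S)
      ((Finset.univ.powersetCard k).filter (IsSingular part)),
      pminor (L.submatrix part part) Z = pminor L S := by
    intro Z hZ
    rw [Finset.mem_filter] at hZ
    obtain ⟨hZ1, hZim⟩ := hZ
    rw [Finset.mem_filter] at hZ1
    rw [pminor_reindex L part Z (injOn_of_singular part hZ1.2), hZim]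
  rw [Finset.sum_congr rfl hterm, Finset.sum_const, card_transversal part k S hSk,
    nsmul_eq_mul, Nat.cast_prod]

end Aux

/-- for every `k`-singular `Y`, assuming `e_k(L̃) > 0`, the two-stage
CoreDpp sampler probability `det(L̃_{C(Y)}) / (e_k(L̃) · ∏_{y∈Y} |𝒴_{c(y)}|)` equals
the `k`-DPP probability `det(L_{C(Y)}) / e_k(L_{C(𝒴)})` of `Y` under the replaced kernel. -/
theorem coredpp_two_stage_equals_replaced_kdpp
    [Fintype 𝒴] [DecidableEq 𝒴]
    (L : Matrix 𝒴 𝒴 ℝ) (hL : L.PosSemidef)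
    (part : 𝒴 → 𝒴) (C : Finset 𝒴) (M : ℕ) (hM : C.card = M)
    (hmem : ∀ y, part y ∈ C) (hfix : ∀ c ∈ C, part c = c)
    (k : ℕ) (Y : Finset 𝒴) (hcard : Y.card = k) (hsing : IsSingular part Y)
    (hpos : 0 < ∑ S ∈ C.powersetCard k, pminor (coreK L part) S) :
    pminor (coreK L part) (Y.image part) /
        ((∑ S ∈ C.powersetCard k, pminor (coreK L part) S) *
          ∏ y ∈ Y, (psize part (part y) : ℝ))
      = pminor (L.submatrix part part) Y /
          ∑ Z ∈ Finset.univ.powersetCard k, pminor (L.submatrix part part) Z := by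
  have hinj := injOn_of_singular part hsing
  have h2 : (∏ y ∈ Y, (psize part (part y) : ℝ))
      = ∏ c ∈ Y.image part, (psize part c : ℝ) := by
    rw [Finset.prod_image]
    intro a ha b hb h
    exact hinj (Finset.mem_coe.mpr ha) (Finset.mem_coe.mpr hb) h
  have h5 : ∑ S ∈ C.powersetCard k, (∏ c ∈ S, (psize part c : ℝ)) * pminor L S
      = ∑ S ∈ C.powersetCard k, pminor (coreK L part) S :=
    Finset.sum_congr rfl fun S _ => (pminor_coreK L part S).symm
  have ha : (0:ℝ) < ∏ c ∈ Y.image part, (psize part c : ℝ) := by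
    refine Finset.prod_pos fun c hc => ?_
    obtain ⟨y, _, rfl⟩ := Finset.mem_image.mp hc
    have : y ∈ Finset.univ.filter fun z => part z = part y := by simp
    have hpos' : 0 < psize part (part y) := Finset.card_pos.mpr ⟨y, this⟩
    exact_mod_cast hpos'
  rw [pminor_coreK, h2, pminor_reindex L part Y hinj, ek_eq L part C hmem k, h5,
    mul_comm (∑ S ∈ C.powersetCard k, pminor (coreK L part) S),
    mul_div_mul_left _ _ (ne_of_gt ha)]
end

section
/- For every k with 0 ≤ k ≤ N, e_k(L_{C(𝒴)}) = e_k(L̃); that is, ∑_{Y ⊆ 𝒴, |Y| = k} det((L_{C(𝒴)})_Y) = ∑_{C' ⊆ C, |C'| = k} det(L̃_{C'}). -/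
open Matrix Finset

variable {𝒴 : Type*}

/-!
Let `P` be the incidence matrix `P c y = [c = part y]`. Then `L_{C(𝒴)} = Pᵀ L P` and
`P Pᵀ = D²` with `D = diag √|𝒴_c|`. The sum of the `k × k` principal minors of `A` is the
`k`-th coefficient of `det (1 + X A)`, so by the Weinstein–Aronszajn identity it is unchanged
under `A B ↦ B A`; hence `e_k(Pᵀ (L P)) = e_k(L D D) = e_k(D L D) = e_k(L̃)`, summing over all
`k`-subsets of `𝒴`. Points outside `C` have empty parts, hence zero rows in `L̃`, so only
subsets of `C` contribute.
-/

theorem Matrix.one_submatrix_mul_mul_one_submatrix {m n R : Type*} [Fintype m] [DecidableEq m]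
    [Semiring R] (f : n → m) (A : Matrix m m R) :
    (1 : Matrix m m R).submatrix f id * A * (1 : Matrix m m R).submatrix id f
      = A.submatrix f f := by
  ext i j
  simp [mul_apply, one_apply]

theorem Matrix.one_submatrix_id_mul_one_submatrix_id {m n R : Type*} [Fintype n] [DecidableEq m]
    [Semiring R] (f : n → m) :
    (1 : Matrix m m R).submatrix id f * (1 : Matrix m m R).submatrix f id
      = diagonal fun c => ((univ.filter fun y => f y = c).card : R) := by
  ext i j
  simp only [mul_apply, submatrix_apply, one_apply, id, diagonal_apply]
  split_ifs with hij
  · subst hij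
    simp +contextual [eq_comm]
  · exact sum_eq_zero fun y _ => by split_ifs <;> simp_all

open Polynomial in
theorem sum_pminor_powersetCard_eq_coeff {n : Type*} [Fintype n] [DecidableEq n]
    (A : Matrix n n ℝ) (k : ℕ) :
    ∑ S ∈ univ.powersetCard k, pminor A S = (det (1 + (X : ℝ[X]) • A.map C)).coeff k :=
  (coeff_det_one_add_X_smul_eq_sum_minors A k).symm

open Polynomial in
theorem sum_pminor_mul_comm {m n : Type*} [Fintype m] [DecidableEq m] [Fintype n]
    [DecidableEq n] (A : Matrix m n ℝ) (B : Matrix n m ℝ) (k : ℕ) :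
    ∑ S ∈ univ.powersetCard k, pminor (A * B) S = ∑ S ∈ univ.powersetCard k, pminor (B * A) S := by
  simp only [sum_pminor_powersetCard_eq_coeff, Matrix.map_mul, ← Matrix.smul_mul]
  rw [det_one_add_mul_comm, Matrix.mul_smul, Matrix.smul_mul]

theorem pminor_eq_zero_of_row_eq_zero {n : Type*} [DecidableEq n] {A : Matrix n n ℝ}
    {S : Finset n} {i : n} (hi : i ∈ S) (h : ∀ j, A i j = 0) : pminor A S = 0 :=
  det_eq_zero_of_row_eq_zero ⟨i, hi⟩ fun j => h j

section CoreKernel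

variable [Fintype 𝒴] [DecidableEq 𝒴]

theorem psize_eq_zero_of_notMem_range {part : 𝒴 → 𝒴} {c : 𝒴} (hc : c ∉ Set.range part) :
    psize part c = 0 := by
  simpa [psize, Finset.filter_eq_empty_iff] using hc

theorem coreK_eq_diagonal_mul_mul_diagonal (L : Matrix 𝒴 𝒴 ℝ) (part : 𝒴 → 𝒴) :
    coreK L part = diagonal (fun c => √(psize part c : ℝ)) * L
      * diagonal (fun c => √(psize part c : ℝ)) := by
  ext i j
  rw [mul_diagonal, diagonal_mul, coreK, Real.sqrt_mul (Nat.cast_nonneg _)]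
  ring

theorem sum_pminor_submatrix_eq_sum_pminor_coreK (L : Matrix 𝒴 𝒴 ℝ) (part : 𝒴 → 𝒴) (k : ℕ) :
    ∑ Y ∈ univ.powersetCard k, pminor (L.submatrix part part) Y
      = ∑ Y ∈ univ.powersetCard k, pminor (coreK L part) Y := by
  set P : Matrix 𝒴 𝒴 ℝ := (1 : Matrix 𝒴 𝒴 ℝ).submatrix id part
  set D : Matrix 𝒴 𝒴 ℝ := diagonal fun c => √(psize part c : ℝ)
  have hPP : P * (1 : Matrix 𝒴 𝒴 ℝ).submatrix part id = D * D := by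
    rw [one_submatrix_id_mul_one_submatrix_id, diagonal_mul_diagonal]
    exact congrArg diagonal (funext fun c => (Real.mul_self_sqrt (Nat.cast_nonneg _)).symm)
  calc ∑ Y ∈ univ.powersetCard k, pminor (L.submatrix part part) Y
      = ∑ Y ∈ univ.powersetCard k,
          pminor ((1 : Matrix 𝒴 𝒴 ℝ).submatrix part id * (L * P)) Y := by
        rw [← Matrix.mul_assoc, one_submatrix_mul_mul_one_submatrix]
    _ = ∑ Y ∈ univ.powersetCard k, pminor (L * D * D) Y := by
        rw [sum_pminor_mul_comm, Matrix.mul_assoc, hPP, Matrix.mul_assoc]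
    _ = ∑ Y ∈ univ.powersetCard k, pminor (coreK L part) Y := by
        rw [sum_pminor_mul_comm, coreK_eq_diagonal_mul_mul_diagonal, Matrix.mul_assoc]

theorem sum_pminor_coreK_eq_sum_powersetCard_of_range_subset (L : Matrix 𝒴 𝒴 ℝ)
    {part : 𝒴 → 𝒴} {C : Finset 𝒴} (hmem : ∀ y, part y ∈ C) (k : ℕ) :
    ∑ Y ∈ univ.powersetCard k, pminor (coreK L part) Y
      = ∑ C' ∈ C.powersetCard k, pminor (coreK L part) C' := by
  refine (sum_subset (powersetCard_mono (subset_univ C)) fun Y hYk hY => ?_).symm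
  obtain ⟨c, hcY, hcC⟩ : ∃ c ∈ Y, c ∉ C :=
    not_subset.mp fun hYC => hY (mem_powersetCard.mpr ⟨hYC, (mem_powersetCard.mp hYk).2⟩)
  have hc : psize part c = 0 :=
    psize_eq_zero_of_notMem_range fun ⟨y, hy⟩ => hcC (hy ▸ hmem y)
  exact pminor_eq_zero_of_row_eq_zero hcY fun j => by simp [coreK, hc]

end CoreKernel

theorem esym_replaced_eq_esym_coreK_general
    [Fintype 𝒴] [DecidableEq 𝒴]
    (L : Matrix 𝒴 𝒴 ℝ)
    (part : 𝒴 → 𝒴) (C : Finset 𝒴)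
    (hmem : ∀ y, part y ∈ C)
    (k : ℕ) :
    ∑ Y ∈ Finset.univ.powersetCard k, pminor (L.submatrix part part) Y
      = ∑ C' ∈ C.powersetCard k, pminor (coreK L part) C' :=
  (sum_pminor_submatrix_eq_sum_pminor_coreK L part k).trans
    (sum_pminor_coreK_eq_sum_powersetCard_of_range_subset L hmem k)

/-- `e_k(L_{C(𝒴)}) = e_k(L̃)` for every `0 ≤ k ≤ N`: the sum of the
`k×k` principal minors of the replaced kernel equals the sum of the `k×k`
principal minors of the rescaled core kernel over `k`-subsets of the coreset `C`. -/
theorem esym_replaced_eq_esym_coreK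
    [Fintype 𝒴] [DecidableEq 𝒴]
    (L : Matrix 𝒴 𝒴 ℝ)
    (part : 𝒴 → 𝒴) (C : Finset 𝒴) (M : ℕ) (hM : C.card = M)
    (hmem : ∀ y, part y ∈ C) (hfix : ∀ c ∈ C, part c = c)
    (k : ℕ) (hk : k ≤ Fintype.card 𝒴) :
    ∑ Y ∈ Finset.univ.powersetCard k, pminor (L.submatrix part part) Y
      = ∑ C' ∈ C.powersetCard k, pminor (coreK L part) C' :=
  esym_replaced_eq_esym_coreK_general L part C hmem k
end

section
/- For every k with 0 ≤ k ≤ N, ∑_{Y k-singular} det(L_{C(Y)}) = ∑_{C' ⊆ C, |C'| = k} ( ∏_{c ∈ C'} |𝒴_c| ) · det(L_{C'}); that is, the sum of the replaced-kernel minors over all k-singular sets equals the weighted sum of the k×k principal minors of L indexed by k-subsets of the coreset, where each core subset C' is weighted by the product of the sizes of the corresponding parts. -/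
open Matrix Finset

variable {𝒴 : Type*}

/- ### Auxiliary lemmas -/

lemma singular_injOn [DecidableEq 𝒴] {part : 𝒴 → 𝒴} {Y : Finset 𝒴}
    (h : IsSingular part Y) : Set.InjOn part (Y : Set 𝒴) := by
  intro a ha b hb hab
  have ha' : a ∈ Y.filter fun y => part y = part b := by
    simp [Finset.mem_filter, hab]; exact ha
  have hb' : b ∈ Y.filter fun y => part y = part b := by
    simp [Finset.mem_filter]; exact hb
  exact Finset.card_le_one.mp (h (part b)) a ha' b hb'

lemma exists_unique_rep [DecidableEq 𝒴] {part : 𝒴 → 𝒴} {Y : Finset 𝒴}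
    (h : IsSingular part Y) {c : 𝒴} (hc : c ∈ Y.image part) :
    ∃! y, y ∈ Y ∧ part y = c := by
  obtain ⟨y, hy, hyc⟩ := Finset.mem_image.mp hc
  refine ⟨y, ⟨hy, hyc⟩, fun z ⟨hz, hzc⟩ => ?_⟩
  exact singular_injOn h hz hy (by rw [hzc, hyc])

/-- The key determinant identity: if `part` is injective on `Y`, the minor of the
replaced kernel at `Y` equals the minor of `L` at `Y.image part`. -/
lemma pminor_submatrix_image [DecidableEq 𝒴] (L : Matrix 𝒴 𝒴 ℝ) (part : 𝒴 → 𝒴)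
    (Y : Finset 𝒴) (hinj : Set.InjOn part (Y : Set 𝒴)) :
    pminor (L.submatrix part part) Y = pminor L (Y.image part) := by
  have hbij : Function.Bijective
      (fun y : Y => (⟨part y, Finset.mem_image_of_mem part y.2⟩ : (Y.image part : Finset 𝒴))) := by
    constructor
    · intro a b hab
      exact Subtype.ext (hinj a.2 b.2 (by simpa using congrArg Subtype.val hab))
    · rintro ⟨b, hb⟩
      obtain ⟨y, hy, hyb⟩ := Finset.mem_image.mp hb
      exact ⟨⟨y, hy⟩, Subtype.ext hyb⟩
  let e : Y ≃ (Y.image part : Finset 𝒴) := Equiv.ofBijective _ hbij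
  have : pminor L (Y.image part) =
      ((L.submatrix (fun i : (Y.image part : Finset 𝒴) => (i : 𝒴))
        (fun j : (Y.image part : Finset 𝒴) => (j : 𝒴))).submatrix e e).det := by
    rw [Matrix.det_submatrix_equiv_self]; rfl
  rw [this]
  rfl

/-- Counting: the number of `k`-singular sets with core image `C'` is `∏_{c∈C'} |𝒴_c|`. -/
lemma card_singular_image [Fintype 𝒴] [DecidableEq 𝒴] (part : 𝒴 → 𝒴) (k : ℕ)
    (C' : Finset 𝒴) (hC'k : C'.card = k) :
    (((Finset.univ.powersetCard k).filter (fun Y => IsSingular part Y)).filter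
        (fun Y => Y.image part = C')).card
      = ∏ c ∈ C', psize part c := by
  rw [show ∏ c ∈ C', psize part c
      = (C'.pi (fun c => Finset.univ.filter fun y => part y = c)).card from
      (Finset.card_pi _ _).symm]
  refine Finset.card_bij'
    (fun Y hY => fun c hc => Finset.choose (fun y => part y = c) Y ?_)
    (fun g hg => C'.attach.image (fun c => g c.1 c.2)) ?_ ?_ ?_ ?_
  · -- unique representative exists
    simp only [Finset.mem_filter, Finset.mem_powersetCard_univ] at hY
    exact exists_unique_rep hY.1.2 (hY.2 ▸ hc)
  · -- i maps into the pi set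
    intro Y hY
    exact Finset.mem_pi.mpr fun c hc => Finset.mem_filter.mpr
      ⟨Finset.mem_univ _, Finset.choose_property (fun y => part y = c) Y _⟩
  · -- j maps into the filtered set
    intro g hg
    simp only [Finset.mem_pi, Finset.mem_filter, Finset.mem_univ, true_and] at hg
    have hpart : ∀ (c : 𝒴) (hc : c ∈ C'), part (g c hc) = c := hg
    have hinj : Set.InjOn (fun c : {x // x ∈ C'} => g c.1 c.2) (C'.attach : Set _) := by
      intro a _ b _ hab
      have : part (g a.1 a.2) = part (g b.1 b.2) := by
        simpa using congrArg part hab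
      rw [hpart, hpart] at this
      exact Subtype.ext this
    have hcard : (C'.attach.image (fun c => g c.1 c.2)).card = k := by
      rw [Finset.card_image_of_injOn hinj, Finset.card_attach, hC'k]
    have himg : (C'.attach.image (fun c => g c.1 c.2)).image part = C' := by
      rw [Finset.image_image]
      have : (part ∘ fun c : {x // x ∈ C'} => g c.1 c.2) = fun c => c.1 := by
        funext c; exact hpart c.1 c.2
      rw [this, Finset.attach_image_val]
    refine Finset.mem_filter.mpr ⟨Finset.mem_filter.mpr
      ⟨Finset.mem_powersetCard_univ.mpr hcard, ?_⟩, himg⟩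
    -- singularity
    intro c
    refine Finset.card_le_one.mpr fun a ha b hb => ?_
    simp only [Finset.mem_filter, Finset.mem_image, Finset.mem_attach, true_and] at ha hb
    obtain ⟨⟨⟨ca, hca⟩, rfl⟩, hpa⟩ := ha
    obtain ⟨⟨⟨cb, hcb⟩, rfl⟩, hpb⟩ := hb
    rw [hpart] at hpa hpb
    subst hpa; subst hpb; rfl
  · -- left inverse
    intro Y hY
    simp only [Finset.mem_filter, Finset.mem_powersetCard_univ] at hY
    obtain ⟨⟨hcard, hsing⟩, himg⟩ := hY
    ext y
    simp only [Finset.mem_image, Finset.mem_attach, true_and]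
    constructor
    · rintro ⟨c, rfl⟩
      exact Finset.choose_mem _ _ _
    · intro hy
      refine ⟨⟨part y, himg ▸ Finset.mem_image_of_mem part hy⟩, ?_⟩
      have hu := exists_unique_rep hsing (Finset.mem_image_of_mem part hy)
      exact hu.unique ⟨Finset.choose_mem _ _ _,
        Finset.choose_property (fun z => part z = part y) Y _⟩ ⟨hy, rfl⟩
  · -- right inverse
    intro g hg
    simp only [Finset.mem_pi, Finset.mem_filter, Finset.mem_univ, true_and] at hg
    funext c hc
    have hmem : g c hc ∈ C'.attach.image (fun c => g c.1 c.2) :=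
      Finset.mem_image.mpr ⟨⟨c, hc⟩, Finset.mem_attach _ _, rfl⟩
    have hu : ∃! y, y ∈ C'.attach.image (fun c => g c.1 c.2) ∧ part y = c := by
      refine ⟨g c hc, ⟨hmem, hg c hc⟩, ?_⟩
      rintro z ⟨hz, hzc⟩
      obtain ⟨⟨cz, hcz⟩, _, rfl⟩ := Finset.mem_image.mp hz
      have : cz = c := by rw [← hg cz hcz, hzc]
      subst this; rfl
    exact hu.unique ⟨Finset.choose_mem _ _ _,
      Finset.choose_property (fun y => part y = c) _ _⟩ ⟨hmem, hg c hc⟩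

/-- the sum of the replaced-kernel minors `det(L_{C(Y)})` over all
`k`-singular sets `Y` equals the weighted sum `∑_{C'⊆C, |C'|=k} (∏_{c∈C'}|𝒴_c|)·det(L_{C'})`. -/
theorem sum_singular_replaced_minors
    [Fintype 𝒴] [DecidableEq 𝒴]
    (L : Matrix 𝒴 𝒴 ℝ)
    (part : 𝒴 → 𝒴) (C : Finset 𝒴)
    (hmem : ∀ y, part y ∈ C) (hfix : ∀ c ∈ C, part c = c)
    (k : ℕ) (hk : k ≤ Fintype.card 𝒴) :
    ∑ Y ∈ (Finset.univ.powersetCard k).filter (fun Y => IsSingular part Y),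
        pminor (L.submatrix part part) Y
      = ∑ C' ∈ C.powersetCard k, (∏ c ∈ C', (psize part c : ℝ)) * pminor L C' := by
  set S := (Finset.univ.powersetCard k).filter (fun Y => IsSingular part Y) with hS
  have h1 : ∑ Y ∈ S, pminor (L.submatrix part part) Y
      = ∑ Y ∈ S, pminor L (Y.image part) := by
    refine Finset.sum_congr rfl fun Y hY => ?_
    exact pminor_submatrix_image L part Y
      (singular_injOn (Finset.mem_filter.mp hY).2)
  have h2 := Finset.sum_comp (s := S) (pminor L) (fun Y => Y.image part)
  rw [h1, h2]
  have himg : S.image (fun Y => Y.image part) = C.powersetCard k := by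
    ext C'
    simp only [Finset.mem_image, Finset.mem_powersetCard]
    constructor
    · rintro ⟨Y, hY, rfl⟩
      obtain ⟨hYk, hYs⟩ := Finset.mem_filter.mp hY
      refine ⟨fun c hc => ?_, ?_⟩
      · obtain ⟨y, _, rfl⟩ := Finset.mem_image.mp hc
        exact hmem y
      · rw [Finset.card_image_of_injOn (singular_injOn hYs)]
        exact Finset.mem_powersetCard_univ.mp hYk
    · rintro ⟨hC'C, hC'k⟩
      have hpid : ∀ c ∈ C', part c = c := fun c hc => hfix c (hC'C hc)
      refine ⟨C', Finset.mem_filter.mpr ⟨Finset.mem_powersetCard_univ.mpr hC'k, ?_⟩, ?_⟩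
      · intro c
        refine Finset.card_le_one.mpr fun a ha b hb => ?_
        simp only [Finset.mem_filter] at ha hb
        rw [hpid a ha.1] at ha; rw [hpid b hb.1] at hb
        rw [ha.2, hb.2]
      · rw [Finset.image_congr (g := id) (fun c hc => hpid c hc), Finset.image_id]
  rw [himg]
  refine Finset.sum_congr rfl fun C' hC' => ?_
  have hC'k : C'.card = k := (Finset.mem_powersetCard.mp hC').2
  rw [card_singular_image part k C' hC'k, nsmul_eq_mul, Nat.cast_prod]
end

section
/- Let ε ≥ 0 and suppose det(L_S) > 0 for every S ⊆ 𝒴 with |S| ≤ k. Suppose that for every core c ∈ C, all u, v ∈ 𝒴_c, and every S ⊆ 𝒴 with |S| = k−1, S singular with respect to Π, and S ∩ 𝒴_c = ∅, one has det(L_{S ∪ {u}}) ≤ (1+ε) · det(L_{S ∪ {v}}). Then for every k-singular set Y ⊆ 𝒴: (1+ε)^{−k} · det(L_Y) ≤ det(L_{C(Y)}) ≤ (1+ε)^{k} · det(L_Y). -/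
open Matrix Finset

variable {𝒴 : Type*}

lemma isSingular_iff_injOn [DecidableEq 𝒴] (part : 𝒴 → 𝒴) (Z : Finset 𝒴) :
    IsSingular part Z ↔ Set.InjOn part Z := by
  constructor
  · intro h y hy z hz hyz
    have h1 := h (part z)
    rw [Finset.card_le_one] at h1
    exact h1 y (Finset.mem_filter.2 ⟨Finset.mem_coe.1 hy, hyz⟩)
      z (Finset.mem_filter.2 ⟨Finset.mem_coe.1 hz, rfl⟩)
  · intro h c
    rw [Finset.card_le_one]
    intro a ha b hb
    simp only [Finset.mem_filter] at ha hb
    exact h ha.1 hb.1 (ha.2.trans hb.2.symm)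

lemma pminor_submatrix [DecidableEq 𝒴] (L : Matrix 𝒴 𝒴 ℝ) (part : 𝒴 → 𝒴)
    (Y : Finset 𝒴) (hinj : Set.InjOn part Y) :
    pminor (L.submatrix part part) Y = pminor L (Y.image part) := by
  unfold pminor
  have hbij : Function.Bijective (fun y : Y => (⟨part y, Finset.mem_image_of_mem part y.2⟩ :
      (Y.image part : Finset 𝒴))) := by
    constructor
    · intro a b hab
      exact Subtype.ext (hinj a.2 b.2 (by simpa using hab))
    · rintro ⟨z, hz⟩
      obtain ⟨y, hy, rfl⟩ := Finset.mem_image.1 hz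
      exact ⟨⟨y, hy⟩, rfl⟩
  let e := Equiv.ofBijective _ hbij
  have : (L.submatrix part part).submatrix (fun i : Y => (i : 𝒴)) (fun j : Y => (j : 𝒴))
      = (L.submatrix (fun i : (Y.image part : Finset 𝒴) => (i : 𝒴))
          (fun j : (Y.image part : Finset 𝒴) => (j : 𝒴))).submatrix e e := rfl
  rw [this, Matrix.det_submatrix_equiv_self]

lemma core_induction
    [Fintype 𝒴] [DecidableEq 𝒴]
    (L : Matrix 𝒴 𝒴 ℝ) (part : 𝒴 → 𝒴) (C : Finset 𝒴)
    (hmem : ∀ y, part y ∈ C) (hfix : ∀ c ∈ C, part c = c)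
    (k : ℕ) (ε : ℝ) (hε : 0 ≤ ε)
    (hdist : ∀ c ∈ C, ∀ u v : 𝒴, part u = c → part v = c →
      ∀ S : Finset 𝒴, S.card = k - 1 → IsSingular part S → (∀ s ∈ S, part s ≠ c) →
        pminor L (insert u S) ≤ (1 + ε) * pminor L (insert v S)) :
    ∀ m : ℕ, ∀ Z : Finset 𝒴, (Z.filter fun z => part z ≠ z).card = m →
      Z.card = k → IsSingular part Z →
      pminor L (Z.image part) ≤ (1 + ε) ^ m * pminor L Z ∧
        pminor L Z ≤ (1 + ε) ^ m * pminor L (Z.image part) := by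
  intro m
  induction m with
  | zero =>
    intro Z hm _ _
    have hZfix : ∀ z ∈ Z, part z = z := by
      intro z hz
      by_contra h
      have : z ∈ Z.filter fun z => part z ≠ z := Finset.mem_filter.2 ⟨hz, h⟩
      rw [Finset.card_eq_zero] at hm
      simp [hm] at this
    have himg : Z.image part = Z := by
      rw [Finset.image_congr (fun x hx => hZfix x (by simpa using hx)), Finset.image_id']
    rw [himg]
    constructor <;> simp
  | succ n ih =>
    intro Z hm hZcard hZsing
    have hZinj : Set.InjOn part Z := (isSingular_iff_injOn part Z).1 hZsing
    -- pick a non-fixed element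
    have hne : (Z.filter fun z => part z ≠ z).Nonempty := by
      rw [← Finset.card_pos, hm]; omega
    obtain ⟨a, ha⟩ := hne
    have haZ : a ∈ Z := (Finset.mem_filter.1 ha).1
    have hafix : part a ≠ a := (Finset.mem_filter.1 ha).2
    have hppa : part (part a) = part a := hfix _ (hmem a)
    have hpaZ : part a ∉ Z := by
      intro h
      exact hafix (hZinj h haZ hppa)
    set Z' := insert (part a) (Z.erase a) with hZ'def
    have hpaE : part a ∉ Z.erase a := fun h => hpaZ (Finset.mem_of_mem_erase h)
    have hkpos : 0 < k := by
      rw [← hZcard]; exact Finset.card_pos.2 ⟨a, haZ⟩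
    have hEcard : (Z.erase a).card = k - 1 := by
      rw [Finset.card_erase_of_mem haZ, hZcard]
    have hZ'card : Z'.card = k := by
      rw [hZ'def, Finset.card_insert_of_notMem hpaE, hEcard]; omega
    -- injectivity / singularity of Z'
    have hZ'inj : Set.InjOn part Z' := by
      intro x hx y hy hxy
      simp only [hZ'def, Finset.coe_insert, Set.mem_insert_iff, Finset.mem_coe,
        Finset.mem_erase] at hx hy
      rcases hx with rfl | ⟨hxa, hxZ⟩ <;> rcases hy with rfl | ⟨hya, hyZ⟩
      · rfl
      · exact absurd (hZinj hyZ haZ (by rw [← hxy, hppa])) hya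
      · exact absurd (hZinj hxZ haZ (by rw [hxy, hppa])) hxa
      · exact hZinj hxZ hyZ hxy
    have hZ'sing : IsSingular part Z' := (isSingular_iff_injOn part Z').2 hZ'inj
    -- the erase set is singular and avoids the class of `part a`
    have hEsing : IsSingular part (Z.erase a) :=
      (isSingular_iff_injOn part _).2 (hZinj.mono (by simp [Finset.erase_subset]))
    have hEavoid : ∀ s ∈ Z.erase a, part s ≠ part a := by
      intro s hs h
      exact (Finset.mem_erase.1 hs).1 (hZinj (Finset.mem_of_mem_erase hs) haZ h)
    -- images agree
    have himg : Z.image part = Z'.image part := by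
      conv_lhs => rw [← Finset.insert_erase haZ]
      rw [hZ'def, Finset.image_insert, Finset.image_insert, hppa]
    -- filter count decreases
    have hm' : (Z'.filter fun z => part z ≠ z).card = n := by
      have h1 : (Z'.filter fun z => part z ≠ z) = (Z.filter fun z => part z ≠ z).erase a := by
        rw [hZ'def, Finset.filter_insert, if_neg (by simp [hppa])]
        ext x
        simp only [Finset.mem_filter, Finset.mem_erase]
        tauto
      rw [h1, Finset.card_erase_of_mem ha, hm]; omega
    -- one-step distortion
    have hins_a : insert a (Z.erase a) = Z := Finset.insert_erase haZ
    have h1 : pminor L Z ≤ (1 + ε) * pminor L Z' := by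
      have := hdist (part a) (hmem a) a (part a) rfl hppa (Z.erase a) hEcard hEsing hEavoid
      rwa [hins_a] at this
    have h2 : pminor L Z' ≤ (1 + ε) * pminor L Z := by
      have := hdist (part a) (hmem a) (part a) a hppa rfl (Z.erase a) hEcard hEsing hEavoid
      rwa [hins_a] at this
    obtain ⟨ih1, ih2⟩ := ih Z' hm' hZ'card hZ'sing
    have hpow : (0:ℝ) ≤ (1 + ε) ^ n := by positivity
    have hone : (0:ℝ) ≤ 1 + ε := by linarith
    rw [himg]
    constructor
    · calc pminor L (Z'.image part) ≤ (1 + ε) ^ n * pminor L Z' := ih1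
        _ ≤ (1 + ε) ^ n * ((1 + ε) * pminor L Z) := by
            exact mul_le_mul_of_nonneg_left h2 hpow
        _ = (1 + ε) ^ (n + 1) * pminor L Z := by ring
    · calc pminor L Z ≤ (1 + ε) * pminor L Z' := h1
        _ ≤ (1 + ε) * ((1 + ε) ^ n * pminor L (Z'.image part)) := by
            exact mul_le_mul_of_nonneg_left ih2 hone
        _ = (1 + ε) ^ (n + 1) * pminor L (Z'.image part) := by ring

/-- Lemma 2 of the paper: if replacing one element of a singular set by another
element of the same part distorts the determinant by at most a factor `1 + ε`, then for every
`k`-singular `Y` we have `(1+ε)^{-k}·det(L_Y) ≤ det(L_{C(Y)}) ≤ (1+ε)^{k}·det(L_Y)`. -/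
theorem det_replaced_distortion_bound
    [Fintype 𝒴] [DecidableEq 𝒴]
    (L : Matrix 𝒴 𝒴 ℝ) (hL : L.PosSemidef)
    (part : 𝒴 → 𝒴) (C : Finset 𝒴)
    (hmem : ∀ y, part y ∈ C) (hfix : ∀ c ∈ C, part c = c)
    (k : ℕ) (ε : ℝ) (hε : 0 ≤ ε)
    (hdet : ∀ S : Finset 𝒴, S.card ≤ k → 0 < pminor L S)
    (hdist : ∀ c ∈ C, ∀ u v : 𝒴, part u = c → part v = c →
      ∀ S : Finset 𝒴, S.card = k - 1 → IsSingular part S → (∀ s ∈ S, part s ≠ c) →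
        pminor L (insert u S) ≤ (1 + ε) * pminor L (insert v S))
    (Y : Finset 𝒴) (hcard : Y.card = k) (hsing : IsSingular part Y) :
    ((1 + ε) ^ k)⁻¹ * pminor L Y ≤ pminor (L.submatrix part part) Y ∧
      pminor (L.submatrix part part) Y ≤ (1 + ε) ^ k * pminor L Y := by
  have hinj : Set.InjOn part Y := (isSingular_iff_injOn part Y).1 hsing
  rw [pminor_submatrix L part Y hinj]
  set m := (Y.filter fun z => part z ≠ z).card with hmdef
  have hmk : m ≤ k := by
    rw [hmdef, ← hcard]
    exact Finset.card_filter_le _ _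
  obtain ⟨h1, h2⟩ := core_induction L part C hmem hfix k ε hε hdist m Y rfl hcard hsing
  have hpowle : (1 + ε) ^ m ≤ (1 + ε) ^ k := pow_le_pow_right₀ (by linarith) hmk
  have hYpos : 0 < pminor L Y := hdet Y hcard.le
  have hIpos : 0 < pminor L (Y.image part) :=
    hdet _ (le_trans (Finset.card_image_le) hcard.le)
  have hkpow : (0:ℝ) < (1 + ε) ^ k := by positivity
  constructor
  · rw [inv_mul_le_iff₀ hkpow]
    calc pminor L Y ≤ (1 + ε) ^ m * pminor L (Y.image part) := h2
      _ ≤ (1 + ε) ^ k * pminor L (Y.image part) :=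
          mul_le_mul_of_nonneg_right hpowle hIpos.le
  · calc pminor L (Y.image part) ≤ (1 + ε) ^ m * pminor L Y := h1
      _ ≤ (1 + ε) ^ k * pminor L Y := mul_le_mul_of_nonneg_right hpowle hYpos.le
end

section
/- Suppose 1 ≤ k ≤ M ≤ N, det(L_S) > 0 for every S ⊆ 𝒴 with |S| ≤ k, and let ε ≥ 0 be such that for every k-singular Y ⊆ 𝒴, |det(L_{C(Y)}) − det(L_Y)| ≤ kε · det(L_Y). Define Z = ∑_{|Y|=k} det(L_Y), Z_C = ∑_{|Y|=k} det(L_{C(Y)}), P_k(Y) = det(L_Y)/Z, P_{C,k}(Y) = det(L_{C(Y)})/Z_C, and p_ns = ∑_{|Y|=k, Y not singular} P_k(Y). Then ∑_{Y ⊆ 𝒴, |Y|=k} |P_k(Y) − P_{C,k}(Y)| ≤ |1 − Z_C/Z| + kε + (1 − kε)·p_ns. -/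
open Matrix Finset

variable {𝒴 : Type*}

lemma psd_det_nonneg {n : Type*} [Fintype n] [DecidableEq n]
    {A : Matrix n n ℝ} (hA : A.PosSemidef) : 0 ≤ A.det := by
  rw [hA.isHermitian.det_eq_prod_eigenvalues]
  exact Finset.prod_nonneg fun i _ => by
    simpa using hA.eigenvalues_nonneg i

lemma pminor_nonneg [Fintype 𝒴] [DecidableEq 𝒴] {A : Matrix 𝒴 𝒴 ℝ}
    (hA : A.PosSemidef) (S : Finset 𝒴) : 0 ≤ pminor A S :=
  psd_det_nonneg (hA.submatrix _)

/-- Theorem 3 of the paper: the total variation sum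
`∑_{|Y|=k} |P_k(Y) − P_{C,k}(Y)|` is bounded by `|1 − Z_C/Z| + kε + (1 − kε)·p_ns`. -/
theorem total_variation_bound
    [Fintype 𝒴] [DecidableEq 𝒴]
    (L : Matrix 𝒴 𝒴 ℝ) (hL : L.PosSemidef)
    (part : 𝒴 → 𝒴) (C : Finset 𝒴)
    (hmem : ∀ y, part y ∈ C) (hfix : ∀ c ∈ C, part c = c)
    (k M : ℕ) (hk : 1 ≤ k) (hkM : k ≤ M) (hMcard : C.card = M)
    (hMN : M ≤ Fintype.card 𝒴)
    (hdet : ∀ S : Finset 𝒴, S.card ≤ k → 0 < pminor L S)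
    (ε : ℝ) (hε : 0 ≤ ε)
    (hdist : ∀ Y ∈ (Finset.univ.powersetCard k).filter (fun Y => IsSingular part Y),
      |pminor (L.submatrix part part) Y - pminor L Y| ≤ (k : ℝ) * ε * pminor L Y)
    (Z ZC pns : ℝ)
    (hZ : Z = ∑ Y ∈ Finset.univ.powersetCard k, pminor L Y)
    (hZC : ZC = ∑ Y ∈ Finset.univ.powersetCard k, pminor (L.submatrix part part) Y)
    (hpns : pns = ∑ Y ∈ (Finset.univ.powersetCard k).filter (fun Y => ¬ IsSingular part Y),
      pminor L Y / Z) :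
    ∑ Y ∈ Finset.univ.powersetCard k,
        |pminor L Y / Z - pminor (L.submatrix part part) Y / ZC|
      ≤ |1 - ZC / Z| + (k : ℝ) * ε + (1 - (k : ℝ) * ε) * pns := by
  classical
  set s : Finset (Finset 𝒴) := Finset.univ.powersetCard k with hs
  have hcard : ∀ Y ∈ s, Y.card = k := fun Y hY => (Finset.mem_powersetCard.mp hY).2
  have hZpos : 0 < Z := by
    rw [hZ]
    refine Finset.sum_pos (fun Y hY => hdet Y (le_of_eq (hcard Y hY))) ?_
    refine Finset.powersetCard_nonempty.mpr ?_
    simpa using hkM.trans hMN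
  have hCnn : ∀ Y : Finset 𝒴, 0 ≤ pminor (L.submatrix part part) Y :=
    fun Y => pminor_nonneg (hL.submatrix part) Y
  have hZCnn : 0 ≤ ZC := by
    rw [hZC]; exact Finset.sum_nonneg fun Y _ => hCnn Y
  -- nonsingular sets have vanishing core minor
  have hzero : ∀ Y : Finset 𝒴, ¬ IsSingular part Y →
      pminor (L.submatrix part part) Y = 0 := by
    intro Y hns
    unfold IsSingular at hns
    push_neg at hns
    obtain ⟨c, hc⟩ := hns
    obtain ⟨a, ha, b, hb, hab⟩ := Finset.one_lt_card.mp hc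
    obtain ⟨haY, hpa⟩ := Finset.mem_filter.mp ha
    obtain ⟨hbY, hpb⟩ := Finset.mem_filter.mp hb
    refine Matrix.det_zero_of_row_eq (i := (⟨a, haY⟩ : Y)) (j := (⟨b, hbY⟩ : Y)) ?_ ?_
    · exact fun h => hab (congrArg Subtype.val h)
    · funext j
      simp [Matrix.submatrix_apply, hpa, hpb]
  -- triangle inequality pointwise
  have tri : ∀ Y ∈ s,
      |pminor L Y / Z - pminor (L.submatrix part part) Y / ZC| ≤
        |pminor L Y - pminor (L.submatrix part part) Y| / Z
        + |pminor (L.submatrix part part) Y / Z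
            - pminor (L.submatrix part part) Y / ZC| := by
    intro Y _
    have : pminor L Y / Z - pminor (L.submatrix part part) Y / ZC =
        (pminor L Y - pminor (L.submatrix part part) Y) / Z
        + (pminor (L.submatrix part part) Y / Z
            - pminor (L.submatrix part part) Y / ZC) := by ring
    rw [this]
    calc _ ≤ |(pminor L Y - pminor (L.submatrix part part) Y) / Z| + _ := abs_add_le _ _
    _ = _ := by rw [abs_div, abs_of_pos hZpos]
  refine le_trans (Finset.sum_le_sum tri) ?_
  rw [Finset.sum_add_distrib]
  -- second sum
  have hsecond : ∑ Y ∈ s, |pminor (L.submatrix part part) Y / Z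
      - pminor (L.submatrix part part) Y / ZC| ≤ |1 - ZC / Z| := by
    rcases eq_or_lt_of_le hZCnn with hZC0 | hZCpos
    · have hall : ∀ Y ∈ s, pminor (L.submatrix part part) Y = 0 := by
        intro Y hY
        have := (Finset.sum_eq_zero_iff_of_nonneg (fun Y _ => hCnn Y)).mp
          (hZC ▸ hZC0.symm) Y hY
        exact this
      rw [Finset.sum_eq_zero fun Y hY => by rw [hall Y hY]; simp]
      positivity
    · have : ∀ Y ∈ s, |pminor (L.submatrix part part) Y / Z
          - pminor (L.submatrix part part) Y / ZC|
          = pminor (L.submatrix part part) Y * |1 / Z - 1 / ZC| := by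
        intro Y _
        have h : pminor (L.submatrix part part) Y / Z - pminor (L.submatrix part part) Y / ZC
            = pminor (L.submatrix part part) Y * (1 / Z - 1 / ZC) := by ring
        rw [h, abs_mul, abs_of_nonneg (hCnn Y)]
      rw [Finset.sum_congr rfl this, ← Finset.sum_mul, ← hZC]
      have hZ0 : Z ≠ 0 := hZpos.ne'
      have hZC0 : ZC ≠ 0 := hZCpos.ne'
      have h1 : ZC * |1 / Z - 1 / ZC| = |ZC * (1 / Z - 1 / ZC)| := by
        rw [abs_mul, abs_of_pos hZCpos]
      have h2 : ZC * (1 / Z - 1 / ZC) = -(1 - ZC / Z) := by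
        field_simp
        ring
      rw [h1, h2, abs_neg]
  -- first sum
  have hsplit := Finset.sum_filter_add_sum_filter_not s (fun Y => IsSingular part Y)
    (fun Y => |pminor L Y - pminor (L.submatrix part part) Y| / Z)
  have hsing : ∑ Y ∈ s.filter (fun Y => IsSingular part Y),
      |pminor L Y - pminor (L.submatrix part part) Y| / Z
      ≤ (k : ℝ) * ε * (1 - pns) := by
    have hsum1 : ∑ Y ∈ s, pminor L Y / Z = 1 := by
      rw [← Finset.sum_div, ← hZ, div_self hZpos.ne']
    have h1 : ∑ Y ∈ s.filter (fun Y => IsSingular part Y), pminor L Y / Z = 1 - pns := by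
      have := Finset.sum_filter_add_sum_filter_not s (fun Y => IsSingular part Y)
        (fun Y => pminor L Y / Z)
      rw [hsum1] at this
      rw [hpns]; linarith
    rw [← h1, Finset.mul_sum]
    refine Finset.sum_le_sum fun Y hY => ?_
    rw [abs_sub_comm, div_le_iff₀ hZpos]
    calc |pminor (L.submatrix part part) Y - pminor L Y|
        ≤ (k : ℝ) * ε * pminor L Y := hdist Y hY
      _ = (k : ℝ) * ε * (pminor L Y / Z) * Z := by field_simp
  have hnonsing : ∑ Y ∈ s.filter (fun Y => ¬ IsSingular part Y),
      |pminor L Y - pminor (L.submatrix part part) Y| / Z = pns := by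
    rw [hpns]
    refine Finset.sum_congr rfl fun Y hY => ?_
    rw [hzero Y (Finset.mem_filter.mp hY).2, sub_zero,
      abs_of_pos (hdet Y (le_of_eq (hcard Y (Finset.mem_filter.mp hY).1)))]
  have hfirst : ∑ Y ∈ s, |pminor L Y - pminor (L.submatrix part part) Y| / Z
      ≤ (k : ℝ) * ε * (1 - pns) + pns := by
    rw [← hsplit, hnonsing]; linarith
  calc _ ≤ ((k : ℝ) * ε * (1 - pns) + pns) + |1 - ZC / Z| :=
        add_le_add hfirst hsecond
    _ = |1 - ZC / Z| + (k : ℝ) * ε + (1 - (k : ℝ) * ε) * pns := by ring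
end

section
/- Suppose 1 ≤ k ≤ M ≤ N, det(L_S) > 0 for every S ⊆ 𝒴 with |S| ≤ k, and let ε ≥ 0 be such that for every k-singular Y ⊆ 𝒴, |det(L_{C(Y)}) − det(L_Y)| ≤ kε · det(L_Y). Define Z = ∑_{|Y|=k} det(L_Y), Z_C = ∑_{|Y|=k} det(L_{C(Y)}), P_k(Y) = det(L_Y)/Z, P_{C,k}(Y) = det(L_{C(Y)})/Z_C, and p_ns = ∑_{|Y|=k, Y not singular} P_k(Y). Then ∑_{Y k-singular} |P_k(Y) − P_{C,k}(Y)| ≤ kε·(1 − p_ns) + |1 − Z_C/Z|. -/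
open Matrix Finset

variable {𝒴 : Type*}

/-- the contribution of the `k`-singular sets to the total variation sum
is bounded by `kε·(1 − p_ns) + |1 − Z_C/Z|`. -/
theorem total_variation_singular_part_bound
    [Fintype 𝒴] [DecidableEq 𝒴]
    (L : Matrix 𝒴 𝒴 ℝ) (hL : L.PosSemidef)
    (part : 𝒴 → 𝒴) (C : Finset 𝒴)
    (hmem : ∀ y, part y ∈ C) (hfix : ∀ c ∈ C, part c = c)
    (k M : ℕ) (hk : 1 ≤ k) (hkM : k ≤ M) (hMcard : C.card = M)
    (hMN : M ≤ Fintype.card 𝒴)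
    (hdet : ∀ S : Finset 𝒴, S.card ≤ k → 0 < pminor L S)
    (ε : ℝ) (hε : 0 ≤ ε)
    (hdist : ∀ Y ∈ (Finset.univ.powersetCard k).filter (fun Y => IsSingular part Y),
      |pminor (L.submatrix part part) Y - pminor L Y| ≤ (k : ℝ) * ε * pminor L Y)
    (Z ZC pns : ℝ)
    (hZ : Z = ∑ Y ∈ Finset.univ.powersetCard k, pminor L Y)
    (hZC : ZC = ∑ Y ∈ Finset.univ.powersetCard k, pminor (L.submatrix part part) Y)
    (hpns : pns = ∑ Y ∈ (Finset.univ.powersetCard k).filter (fun Y => ¬ IsSingular part Y),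
      pminor L Y / Z) :
    ∑ Y ∈ (Finset.univ.powersetCard k).filter (fun Y => IsSingular part Y),
        |pminor L Y / Z - pminor (L.submatrix part part) Y / ZC|
      ≤ (k : ℝ) * ε * (1 - pns) + |1 - ZC / Z| := by
  classical
  set s : Finset (Finset 𝒴) := Finset.univ.powersetCard k with hs
  set sing := s.filter (fun Y => IsSingular part Y) with hsing
  have hApsd : (L.submatrix part part).PosSemidef := hL.submatrix part
  have hbnn : ∀ Y : Finset 𝒴, 0 ≤ pminor (L.submatrix part part) Y := fun Y =>
    psd_det_nonneg (hApsd.submatrix _)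
  have hann : ∀ Y ∈ s, 0 < pminor L Y := by
    intro Y hY
    rw [hs, Finset.mem_powersetCard] at hY
    exact hdet Y (le_of_eq hY.2)
  have hsne : s.Nonempty := by
    rw [hs]
    refine Finset.powersetCard_nonempty.mpr ?_
    rw [Finset.card_univ]
    exact hkM.trans hMN
  have hZpos : 0 < Z := by
    rw [hZ]; exact Finset.sum_pos hann hsne
  have hZCnn : 0 ≤ ZC := by
    rw [hZC]; exact Finset.sum_nonneg fun Y _ => hbnn Y
  have hsum1 : ∑ Y ∈ s, pminor L Y / Z = 1 := by
    rw [← Finset.sum_div, ← hZ, div_self hZpos.ne']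
  have hsplit : (∑ Y ∈ sing, pminor L Y / Z) + pns = 1 := by
    rw [hpns, hsing, Finset.sum_filter_add_sum_filter_not s _ (fun Y => pminor L Y / Z)]
    exact hsum1
  have hsingsum : ∑ Y ∈ sing, pminor L Y / Z = 1 - pns := by linarith
  have h1pns : 0 ≤ 1 - pns := by
    rw [← hsingsum]
    exact Finset.sum_nonneg fun Y hY =>
      div_nonneg (hann Y (Finset.mem_filter.mp hY).1).le hZpos.le
  have hpnsnn : 0 ≤ pns := by
    rw [hpns]
    exact Finset.sum_nonneg fun Y hY =>
      div_nonneg (hann Y (Finset.mem_filter.mp hY).1).le hZpos.le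
  rcases eq_or_lt_of_le hZCnn with hZC0 | hZCpos
  · -- ZC = 0
    have hLHS : ∑ Y ∈ sing, |pminor L Y / Z - pminor (L.submatrix part part) Y / ZC|
        = 1 - pns := by
      rw [← hsingsum]
      refine Finset.sum_congr rfl fun Y hY => ?_
      rw [← hZC0, div_zero, sub_zero,
        abs_of_nonneg (div_nonneg (hann Y (Finset.mem_filter.mp hY).1).le hZpos.le)]
    rw [hLHS, ← hZC0, zero_div, sub_zero, abs_one]
    nlinarith [mul_nonneg (mul_nonneg (Nat.cast_nonneg k : (0:ℝ) ≤ k) hε) h1pns]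
  · -- ZC > 0
    have key : ∀ Y ∈ sing,
        |pminor L Y / Z - pminor (L.submatrix part part) Y / ZC|
          ≤ (k : ℝ) * ε * (pminor L Y / Z)
            + (pminor (L.submatrix part part) Y / ZC) * |1 - ZC / Z| := by
      intro Y hY
      set a := pminor L Y
      set b := pminor (L.submatrix part part) Y
      have hb : 0 ≤ b := hbnn Y
      have hdecomp : a / Z - b / ZC = (b - a) / Z * (-1) + (b / ZC) * (ZC / Z - 1) := by
        field_simp
        ring
      calc |a / Z - b / ZC|
          ≤ |(b - a) / Z * (-1)| + |(b / ZC) * (ZC / Z - 1)| := by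
            rw [hdecomp]; exact abs_add_le _ _
        _ = |b - a| / Z + (b / ZC) * |1 - ZC / Z| := by
            rw [abs_mul, abs_mul, abs_neg, abs_one, mul_one, abs_div,
              abs_of_nonneg hZpos.le, abs_of_nonneg (div_nonneg hb hZCpos.le),
              abs_sub_comm (ZC / Z) 1]
        _ ≤ (k : ℝ) * ε * a / Z + (b / ZC) * |1 - ZC / Z| := by
            have h := hdist Y hY
            have h2 : |b - a| / Z ≤ (k : ℝ) * ε * a / Z :=
              by gcongr
            linarith
        _ = (k : ℝ) * ε * (a / Z) + (b / ZC) * |1 - ZC / Z| := by ring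
    calc ∑ Y ∈ sing, |pminor L Y / Z - pminor (L.submatrix part part) Y / ZC|
        ≤ ∑ Y ∈ sing, ((k : ℝ) * ε * (pminor L Y / Z)
            + (pminor (L.submatrix part part) Y / ZC) * |1 - ZC / Z|) :=
          Finset.sum_le_sum key
      _ = (k : ℝ) * ε * (∑ Y ∈ sing, pminor L Y / Z)
            + (∑ Y ∈ sing, pminor (L.submatrix part part) Y / ZC) * |1 - ZC / Z| := by
          rw [Finset.sum_add_distrib, Finset.mul_sum, Finset.sum_mul]
      _ ≤ (k : ℝ) * ε * (1 - pns) + 1 * |1 - ZC / Z| := by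
          have h2 : ∑ Y ∈ sing, pminor (L.submatrix part part) Y / ZC ≤ 1 := by
            rw [← Finset.sum_div, div_le_one hZCpos, hZC, hsing]
            exact Finset.sum_le_sum_of_subset_of_nonneg (Finset.filter_subset _ _)
              (fun Y _ _ => hbnn Y)
          have h3 := mul_le_mul_of_nonneg_right h2 (abs_nonneg (1 - ZC / Z))
          rw [hsingsum]
          linarith
      _ = (k : ℝ) * ε * (1 - pns) + |1 - ZC / Z| := by ring
end

section
/- Suppose 1 ≤ k ≤ M and det(L_S) > 0 for every S ⊆ 𝒴 with |S| ≤ k. For each core c ∈ C define ρ_c = max_{u,v ∈ 𝒴_c} sqrt(L_{uu} + L_{vv} − 2L_{uv}) and d_c = min over all u ∈ 𝒴_c and all (k−1)-singular S with S ∩ 𝒴_c = ∅ of sqrt( det(L_{S∪{u}}) / det(L_S) ) (with det(L_∅) = 1). If d_c > ρ_c for every c ∈ C, then for every c ∈ C, all u, v ∈ 𝒴_c, and every (k−1)-singular S with S ∩ 𝒴_c = ∅: det(L_{S∪{u}}) / det(L_{S∪{v}}) ≤ d_c² / (d_c − ρ_c)² = 1 + (2d_c − ρ_c)ρ_c / (d_c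 − ρ_c)². -/
/-! For a Gram matrix `L`, the ratio `det L_{S ∪ {x}} / det L_S` is the squared distance `r_x²`
from the feature vector `φ_x` to the span of the features of `S`: the diagonal of the Schur
complement of `L_S`. Projecting onto the orthogonal complement of that span is a contraction, so
`‖r_u - r_v‖ ≤ ‖φ_u - φ_v‖ ≤ ρ_c` and hence `r_u ≤ r_v + ρ_c`. Since `r_v ≥ d_c > ρ_c`, this gives
`r_u / r_v ≤ 1 + ρ_c / d_c ≤ d_c / (d_c - ρ_c)`. -/

open Matrix Finset

variable {𝒴 : Type*}

namespace Matrix.PosSemidef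

variable {n : Type*} {P : Matrix n n ℝ}

lemma apply_sq_le (hP : P.PosSemidef) (u v : n) : P u v ^ 2 ≤ P u u * P v v := by
  have h := (hP.submatrix ![u, v]).det_nonneg
  rw [det_fin_two] at h
  have hsymm : P v u = P u v := by simpa using hP.1.apply u v
  simp only [submatrix_apply, Matrix.cons_val_zero, Matrix.cons_val_one, hsymm] at h
  nlinarith

lemma two_mul_apply_le_add (hP : P.PosSemidef) (u v : n) :
    2 * P u v ≤ P u u + P v v := by
  nlinarith [hP.apply_sq_le u v, hP.diag_nonneg (i := u), hP.diag_nonneg (i := v),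
    sq_nonneg (P u u - P v v)]

/-- The triangle inequality `‖φ_u‖ ≤ ‖φ_v‖ + ‖φ_u - φ_v‖` for the Gram vectors of `P`. -/
lemma sqrt_diag_le (hP : P.PosSemidef) (u v : n) :
    √(P u u) ≤ √(P v v) + √(P u u + P v v - 2 * P u v) := by
  have hu := Real.sq_sqrt (hP.diag_nonneg (i := u))
  have hv := Real.sq_sqrt (hP.diag_nonneg (i := v))
  have hcs : P u v ≤ √(P u u) * √(P v v) := by
    rw [← Real.sqrt_mul (hP.diag_nonneg)]
    exact (le_abs_self _).trans (Real.abs_le_sqrt (hP.apply_sq_le u v))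
  have hdiff := Real.abs_le_sqrt (x := √(P u u) - √(P v v)) (y := P u u + P v v - 2 * P u v)
    (by nlinarith)
  linarith [le_abs_self (√(P u u) - √(P v v))]

end Matrix.PosSemidef

section SchurComplement

variable [DecidableEq 𝒴]

/-- The Gram matrix of the residuals of the features after projection onto the span of the
features of `S`. When `L_S` is singular its junk inverse is `0`, and the complement is `L`. -/
noncomputable def Matrix.schurCompl (L : Matrix 𝒴 𝒴 ℝ) (S : Finset 𝒴) : Matrix 𝒴 𝒴 ℝ :=
  L - L.submatrix id (fun j : S => (j : 𝒴)) *
    (L.submatrix (fun i : S => (i : 𝒴)) (fun j : S => (j : 𝒴)))⁻¹ *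
    L.submatrix (fun i : S => (i : 𝒴)) id

lemma pminor_insert (L : Matrix 𝒴 𝒴 ℝ) {S : Finset 𝒴} {x : 𝒴} (hx : x ∉ S)
    (hS : pminor L S ≠ 0) : pminor L (insert x S) = pminor L S * L.schurCompl S x x := by
  set A := L.submatrix (fun i : S => (i : 𝒴)) (fun j : S => (j : 𝒴))
  have : Invertible A := A.invertibleOfIsUnitDet hS.isUnit
  set e := (Finset.subtypeInsertEquivOption hx).trans (Equiv.optionEquivSumPUnit.{0} S)
  have hblocks : (L.submatrix (fun i : (insert x S : Finset 𝒴) => (i : 𝒴))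
      (fun j : (insert x S : Finset 𝒴) => (j : 𝒴))).submatrix e.symm e.symm =
      fromBlocks A (of fun s _ => L s x) (of fun _ s => L x s) (of fun _ _ => L x x) := by
    ext (i | i) (j | j) <;> simp [e, A, subtypeInsertEquivOption]
  rw [pminor, ← det_submatrix_equiv_self e.symm, hblocks, det_fromBlocks₁₁,
    det_unique (n := PUnit), invOf_eq_nonsing_inv]
  simp [Matrix.schurCompl, A, pminor, mul_apply]

variable [Fintype 𝒴] {L : Matrix 𝒴 𝒴 ℝ}

lemma Matrix.PosSemidef.schurCompl (hL : L.PosSemidef) (S : Finset 𝒴) :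
    (L.schurCompl S).PosSemidef := by
  set A := L.submatrix (fun i : S => (i : 𝒴)) (fun j : S => (j : 𝒴))
  set B := L.submatrix (fun i : S => (i : 𝒴)) id
  by_cases hA : IsUnit A.det
  · have hApd : A.PosDef :=
      (hL.submatrix _).posDef_iff_isUnit.2 ((isUnit_iff_isUnit_det _).2 hA)
    have : Invertible A := A.invertibleOfIsUnitDet hA
    have hBt : L.submatrix id (fun j : S => (j : 𝒴)) = Bᴴ := by
      rw [conjTranspose_submatrix, hL.1.eq]
    have hblocks : fromBlocks A B Bᴴ L =
        L.submatrix (Sum.elim (fun i : S => (i : 𝒴)) id) (Sum.elim (fun i : S => (i : 𝒴)) id) := by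
      rw [← hBt]
      ext (i | i) (j | j) <;> rfl
    rw [Matrix.schurCompl, hBt]
    exact (hApd.fromBlocks₁₁ B L).1 (hblocks ▸ hL.submatrix _)
  · simpa [Matrix.schurCompl, A, nonsing_inv_apply_not_isUnit _ hA] using hL

lemma Matrix.PosSemidef.sub_schurCompl (hL : L.PosSemidef) (S : Finset 𝒴) :
    (L - L.schurCompl S).PosSemidef := by
  rw [Matrix.schurCompl, sub_sub_cancel, ← hL.1.eq, ← conjTranspose_submatrix, hL.1.eq]
  exact (hL.submatrix _).inv.conjTranspose_mul_mul_same _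

end SchurComplement

lemma sq_div_sq_le_of_le_add {a b d ρ : ℝ} (ha : 0 ≤ a) (hρ : 0 ≤ ρ) (hρd : ρ < d) (hdb : d ≤ b)
    (hab : a ≤ b + ρ) : a ^ 2 / b ^ 2 ≤ d ^ 2 / (d - ρ) ^ 2 := by
  rw [← div_pow, ← div_pow]
  refine pow_le_pow_left₀ (div_nonneg ha (by linarith)) ?_ 2
  rw [div_le_div_iff₀ (by linarith) (by linarith)]
  nlinarith

theorem distortion_factor_bound_general
    [Fintype 𝒴] [DecidableEq 𝒴]
    (L : Matrix 𝒴 𝒴 ℝ) (hL : L.PosSemidef)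
    (part : 𝒴 → 𝒴) (C : Finset 𝒴) (k : ℕ)
    (hdet : ∀ S : Finset 𝒴, S.card ≤ k → 0 < pminor L S)
    (ρ d : 𝒴 → ℝ)
    (hρ : ∀ c ∈ C, IsGreatest
      {x : ℝ | ∃ u v : 𝒴, part u = c ∧ part v = c ∧
        x = Real.sqrt (L u u + L v v - 2 * L u v)} (ρ c))
    (hd : ∀ c ∈ C, IsLeast
      {x : ℝ | ∃ u : 𝒴, part u = c ∧ ∃ S : Finset 𝒴, S.card = k - 1 ∧ IsSingular part S ∧
        (∀ s ∈ S, part s ≠ c) ∧ x = Real.sqrt (pminor L (insert u S) / pminor L S)} (d c))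
    (hsep : ∀ c ∈ C, ρ c < d c) :
    ∀ c ∈ C, ∀ u v : 𝒴, part u = c → part v = c →
      ∀ S : Finset 𝒴, S.card = k - 1 → IsSingular part S → (∀ s ∈ S, part s ≠ c) →
        pminor L (insert u S) / pminor L (insert v S) ≤ d c ^ 2 / (d c - ρ c) ^ 2 ∧
          d c ^ 2 / (d c - ρ c) ^ 2 = 1 + (2 * d c - ρ c) * ρ c / (d c - ρ c) ^ 2 := by
  intro c hc u v hu hv S hScard hSsing hSc
  have hS : 0 < pminor L S := hdet S (by omega)
  set Q := L.schurCompl S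
  have hQ : Q.PosSemidef := hL.schurCompl S
  have hminor : ∀ x, part x = c → pminor L (insert x S) = pminor L S * Q x x :=
    fun x hx => pminor_insert L (fun h => hSc x h hx) hS.ne'
  have hdv : d c ≤ √(Q v v) := by
    simpa [hminor v hv, hS.ne'] using (hd c hc).2 ⟨v, hv, S, hScard, hSsing, hSc, rfl⟩
  have hρ0 : 0 ≤ ρ c := (Real.sqrt_nonneg _).trans ((hρ c hc).2 ⟨u, u, hu, hu, rfl⟩)
  have hρuv : √(Q u u + Q v v - 2 * Q u v) ≤ ρ c := by
    refine (Real.sqrt_le_sqrt ?_).trans ((hρ c hc).2 ⟨u, v, hu, hv, rfl⟩)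
    have := (hL.sub_schurCompl S).two_mul_apply_le_add u v
    simp only [Matrix.sub_apply] at this
    linarith
  have hgap : d c - ρ c ≠ 0 := (sub_pos.2 (hsep c hc)).ne'
  refine ⟨?_, by field_simp; ring⟩
  rw [hminor u hu, hminor v hv, mul_div_mul_left _ _ hS.ne', ← Real.sq_sqrt hQ.diag_nonneg,
    ← Real.sq_sqrt (hQ.diag_nonneg (i := v))]
  exact sq_div_sq_le_of_le_add (Real.sqrt_nonneg _) hρ0 (hsep c hc) hdv
    ((hQ.sqrt_diag_le u v).trans (by linarith))

/-- Lemma 4 of the paper: with `ρ_c` the diameter of the part `𝒴_c` in feature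
space and `d_c` the least distance-to-span quantity, if `d_c > ρ_c` for all cores, then the
distortion ratio `det(L_{S∪{u}})/det(L_{S∪{v}})` is at most
`d_c²/(d_c−ρ_c)² = 1 + (2d_c−ρ_c)ρ_c/(d_c−ρ_c)²`. -/
theorem distortion_factor_bound
    [Fintype 𝒴] [DecidableEq 𝒴]
    (L : Matrix 𝒴 𝒴 ℝ) (hL : L.PosSemidef)
    (part : 𝒴 → 𝒴) (C : Finset 𝒴) (M : ℕ) (hMcard : C.card = M)
    (hmem : ∀ y, part y ∈ C) (hfix : ∀ c ∈ C, part c = c)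
    (k : ℕ) (hk : 1 ≤ k) (hkM : k ≤ M)
    (hdet : ∀ S : Finset 𝒴, S.card ≤ k → 0 < pminor L S)
    (ρ d : 𝒴 → ℝ)
    (hρ : ∀ c ∈ C, IsGreatest
      {x : ℝ | ∃ u v : 𝒴, part u = c ∧ part v = c ∧
        x = Real.sqrt (L u u + L v v - 2 * L u v)} (ρ c))
    (hd : ∀ c ∈ C, IsLeast
      {x : ℝ | ∃ u : 𝒴, part u = c ∧ ∃ S : Finset 𝒴, S.card = k - 1 ∧ IsSingular part S ∧
        (∀ s ∈ S, part s ≠ c) ∧ x = Real.sqrt (pminor L (insert u S) / pminor L S)} (d c))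
    (hsep : ∀ c ∈ C, ρ c < d c) :
    ∀ c ∈ C, ∀ u v : 𝒴, part u = c → part v = c →
      ∀ S : Finset 𝒴, S.card = k - 1 → IsSingular part S → (∀ s ∈ S, part s ≠ c) →
        pminor L (insert u S) / pminor L (insert v S) ≤ d c ^ 2 / (d c - ρ c) ^ 2 ∧
          d c ^ 2 / (d c - ρ c) ^ 2 = 1 + (2 * d c - ρ c) * ρ c / (d c - ρ c) ^ 2 :=
  distortion_factor_bound_general L hL part C k hdet ρ d hρ hd hsep
end
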